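/- arXiv:1110.1436 — 5 statements merged into one kernel-verified Lean document; each statement's English description precedes it below -/
import Mathlib

section
/- Let ρ : L∞(Ω,F,P) → ℝ be a convex loss-based risk measure, i.e., ρ is convex, monotone decreasing, satisfies ρ(-α) = α for all α ∈ ℝ₊ (cash-loss normalization), and ρ(X) = ρ(min(X,0)) for all X. Then ρ is cash-subadditive: for all X ∈ L∞ and all α ≥ 0, ρ(X - α) ≤ ρ(X) + α and ρ(X + α) ≥ ρ(X) - α. -/
/-!
Writing `X - a = (1 - t) X + t (X - a / t)`, convexity gives
`ρ(X - a) ≤ (1 - t) ρ(X) + t ρ(X - a / t)`. Monotonicity and cash normalization bound the last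
term by `‖X‖ + a / t`, so `ρ(X - a) ≤ ρ(X) + a + t (‖X‖ - ρ(X))`, and `t → 0` gives the first
inequality. The second is the first applied to `X + a`.
-/

open MeasureTheory Filter Topology Set

theorem ConvexOn.le_add_mul_of_le_add_mul_on_ray {E : Type*} [AddCommGroup E] [Module ℝ E]
    {f : E → ℝ} (hf : ConvexOn ℝ univ f) {x v : E} {B s : ℝ}
    (hB : ∀ c : ℝ, 0 ≤ c → f (x + c • v) ≤ B + c * s) {a : ℝ} (ha : 0 ≤ a) :
    f (x + a • v) ≤ f x + a * s := by
  have hchord : ∀ t ∈ Ioo (0 : ℝ) 1, f (x + a • v) ≤ f x + a * s + t * (B - f x) := by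
    rintro t ⟨ht0, ht1⟩
    have hsplit : (1 - t) • x + t • (x + (a / t) • v) = x + a • v := by
      rw [smul_add, smul_smul, mul_div_cancel₀ a ht0.ne']
      module
    calc f (x + a • v) = f ((1 - t) • x + t • (x + (a / t) • v)) := by rw [hsplit]
      _ ≤ (1 - t) * f x + t * f (x + (a / t) • v) :=
        hf.2 (mem_univ _) (mem_univ _) (by linarith) ht0.le (by ring)
      _ ≤ (1 - t) * f x + t * (B + a / t * s) := by
        gcongr; exact hB _ (div_nonneg ha ht0.le)
      _ = f x + a * s + t * (B - f x) := by field_simp; ring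
  have hlim : Tendsto (fun t : ℝ ↦ f x + a * s + t * (B - f x)) (𝓝[>] 0) (𝓝 (f x + a * s)) := by
    refine tendsto_nhdsWithin_of_tendsto_nhds ?_
    simpa using tendsto_const_nhds.add ((tendsto_id (x := 𝓝 (0 : ℝ))).mul_const (B - f x))
  exact ge_of_tendsto hlim (eventually_of_mem (Ioo_mem_nhdsGT one_pos) hchord)

theorem MeasureTheory.Lp.ae_norm_le_norm_top {Ω E : Type*} [MeasurableSpace Ω] {μ : Measure Ω}
    [NormedAddCommGroup E] (X : Lp E ⊤ μ) : ∀ᵐ ω ∂μ, ‖X ω‖ ≤ ‖X‖ := by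
  have h := ae_le_lpNorm_exponent_top (Lp.memLp X)
  rwa [← toReal_eLpNorm (Lp.aestronglyMeasurable X), ← Lp.norm_def] at h

theorem MeasureTheory.Lp.const_neg_norm_le {Ω : Type*} [MeasurableSpace Ω] {μ : Measure Ω}
    [IsFiniteMeasure μ] (X : Lp ℝ ⊤ μ) : Lp.const ⊤ μ (-‖X‖) ≤ X := by
  rw [← Lp.coeFn_le]
  filter_upwards [Lp.ae_norm_le_norm_top X, Lp.coeFn_const ⊤ μ (-‖X‖)] with ω hω hconst
  rw [hconst]
  exact neg_le_of_abs_le hω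

theorem MeasureTheory.Lp.sub_const_eq_add_smul_const_neg_one {Ω : Type*} [MeasurableSpace Ω]
    {μ : Measure Ω} [IsFiniteMeasure μ] {p : ENNReal} (X : Lp ℝ p μ) (c : ℝ) :
    X - Lp.const p μ c = X + c • Lp.const p μ (-1) := by
  change _ = X + Lp.const p μ (c • -1)
  rw [smul_eq_mul, mul_neg_one, map_neg, sub_eq_add_neg]

theorem stmt_2_general {Ω : Type*} [MeasurableSpace Ω] (μ : Measure Ω) [IsProbabilityMeasure μ]
    (ρ : Lp ℝ ⊤ μ → ℝ)
    (hconv : ∀ X Y : Lp ℝ ⊤ μ, ∀ α : ℝ, 0 < α → α < 1 →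
      ρ (α • X + (1 - α) • Y) ≤ α * ρ X + (1 - α) * ρ Y)
    (hmono : ∀ X Y : Lp ℝ ⊤ μ, X ≤ Y → ρ Y ≤ ρ X)
    (hcash : ∀ α : ℝ, 0 ≤ α → ρ (Lp.const ⊤ μ (-α)) = α) :
    ∀ X : Lp ℝ ⊤ μ, ∀ α : ℝ, 0 ≤ α →
      ρ (X - Lp.const ⊤ μ α) ≤ ρ X + α ∧ ρ X - α ≤ ρ (X + Lp.const ⊤ μ α) := by
  have hρ : ConvexOn ℝ univ ρ := convexOn_iff_forall_pos.2 ⟨convex_univ,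
    fun X _ Y _ a b ha hb hab ↦ by
      obtain rfl : b = 1 - a := by linarith
      exact hconv X Y a ha (by linarith)⟩
  have hsub : ∀ X : Lp ℝ ⊤ μ, ∀ α : ℝ, 0 ≤ α → ρ (X - Lp.const ⊤ μ α) ≤ ρ X + α := by
    intro X α hα
    have hbound : ∀ c : ℝ, 0 ≤ c → ρ (X - Lp.const ⊤ μ c) ≤ ‖X‖ + c := by
      intro c hc
      have hle := sub_le_sub_right (Lp.const_neg_norm_le X) (Lp.const ⊤ μ c)
      rw [← map_sub, ← neg_add'] at hle
      rw [← hcash (‖X‖ + c) (by positivity)]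
      exact hmono _ _ hle
    have h := hρ.le_add_mul_of_le_add_mul_on_ray (s := 1)
      (fun c hc ↦ by rw [mul_one, ← Lp.sub_const_eq_add_smul_const_neg_one]; exact hbound c hc) hα
    rwa [mul_one, ← Lp.sub_const_eq_add_smul_const_neg_one] at h
  intro X α hα
  refine ⟨hsub X α hα, ?_⟩
  have h := hsub (X + Lp.const ⊤ μ α) α hα
  rw [add_sub_cancel_right] at h
  linarith

/-- A convex loss-based risk measure on `L∞` is cash-subadditive:
`ρ(X - α) ≤ ρ(X) + α` and `ρ(X + α) ≥ ρ(X) - α` for `α ≥ 0`. -/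
theorem stmt_2 {Ω : Type*} [MeasurableSpace Ω] (μ : Measure Ω) [IsProbabilityMeasure μ]
    (ρ : Lp ℝ ⊤ μ → ℝ)
    (hconv : ∀ X Y : Lp ℝ ⊤ μ, ∀ α : ℝ, 0 < α → α < 1 →
      ρ (α • X + (1 - α) • Y) ≤ α * ρ X + (1 - α) * ρ Y)
    (hmono : ∀ X Y : Lp ℝ ⊤ μ, X ≤ Y → ρ Y ≤ ρ X)
    (hcash : ∀ α : ℝ, 0 ≤ α → ρ (Lp.const ⊤ μ (-α)) = α)
    (hloss : ∀ X : Lp ℝ ⊤ μ, ρ X = ρ (X ⊓ 0)) :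
    ∀ X : Lp ℝ ⊤ μ, ∀ α : ℝ, 0 ≤ α →
      ρ (X - Lp.const ⊤ μ α) ≤ ρ X + α ∧ ρ X - α ≤ ρ (X + Lp.const ⊤ μ α) :=
  stmt_2_general μ ρ hconv hmono hcash
end

section
/- Let ρ be a convex loss-based risk measure on L∞(Ω,F,P) satisfying cash-loss additivity: ρ(X-α) = ρ(X) + α for all X ≤ 0 and α ≥ 0. Then there exists a cash-additive, monotone decreasing, convex map ρ̃ on L∞ such that ρ(X) = ρ̃(min(X,0)) for all X; explicitly, ρ̃(X) := ρ(X - α_X) - α_X is well-defined (independent of the choice of upper bound α_X ≥ ess sup X) and has these properties. -/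
/-!
Cash-loss additivity says that `a ↦ ρ (X - a) - a` is constant on `[a₀, ∞)` as soon as
`X - a₀ ≤ 0`. Hence `ρ̃ X := ρ (X - α_X) - α_X` does not depend on the upper bound `α_X` of `X`,
and every property of `ρ̃` can be checked with a bound chosen to suit the situation: a common
bound of `X` and `Y` turns monotonicity and convexity of `ρ` into those of `ρ̃`, the bound
`α_X + c` of `X + c` gives cash additivity, and the bound `0` of `min(X, 0)` recovers `ρ`.
-/

open MeasureTheory

namespace MeasureTheory.Lp

variable {Ω : Type*} [MeasurableSpace Ω] {μ : Measure Ω}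

instance instPosSMulMono {p : ENNReal} : PosSMulMono ℝ (Lp ℝ p μ) where
  smul_le_smul_of_nonneg_left c hc f g hfg := by
    rw [← Lp.coeFn_le] at hfg ⊢
    filter_upwards [hfg, Lp.coeFn_smul c f, Lp.coeFn_smul c g] with x hx hcf hcg
    rw [hcf, hcg]
    exact smul_le_smul_of_nonneg_left hx hc

variable [IsFiniteMeasure μ]

theorem const_mono {p : ENNReal} : Monotone (Lp.const p μ : ℝ → Lp ℝ p μ) := by
  intro a b hab
  rw [← Lp.coeFn_le]
  filter_upwards [Lp.coeFn_const p μ a, Lp.coeFn_const p μ b] with x ha hb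
  rw [ha, hb]
  exact hab

theorem le_const_norm (f : Lp ℝ ⊤ μ) : f ≤ Lp.const ⊤ μ ‖f‖ := by
  have hfin : eLpNormEssSup f μ ≠ ⊤ := by
    simpa only [eLpNorm_exponent_top] using Lp.eLpNorm_ne_top f
  rw [← Lp.coeFn_le]
  filter_upwards [ae_le_eLpNormEssSup (μ := μ) (f := (f : Ω → ℝ)), Lp.coeFn_const ⊤ μ ‖f‖]
    with x hx hconst
  rw [hconst, Function.const_apply, Lp.norm_def, eLpNorm_exponent_top]
  exact (le_abs_self _).trans (by simpa using ENNReal.toReal_mono hfin hx)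

theorem exists_le_const_and_le_const (f g : Lp ℝ ⊤ μ) :
    ∃ a : ℝ, f ≤ Lp.const ⊤ μ a ∧ g ≤ Lp.const ⊤ μ a :=
  ⟨max ‖f‖ ‖g‖, (le_const_norm f).trans (const_mono (le_max_left _ _)),
    (le_const_norm g).trans (const_mono (le_max_right _ _))⟩

end MeasureTheory.Lp

section CashAdditiveExtension

variable {Ω : Type*} [MeasurableSpace Ω] {μ : Measure Ω} [IsFiniteMeasure μ]
  {ρ : Lp ℝ ⊤ μ → ℝ}

def CashLossAdditive (ρ : Lp ℝ ⊤ μ → ℝ) : Prop :=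
  ∀ X : Lp ℝ ⊤ μ, X ≤ 0 → ∀ α : ℝ, 0 ≤ α → ρ (X - Lp.const ⊤ μ α) = ρ X + α

noncomputable def cashAdditiveExtension (ρ : Lp ℝ ⊤ μ → ℝ) (X : Lp ℝ ⊤ μ) : ℝ :=
  ρ (X - Lp.const ⊤ μ ‖X‖) - ‖X‖

namespace CashLossAdditive

theorem sub_const_sub_eq_of_le (hρ : CashLossAdditive ρ) {X : Lp ℝ ⊤ μ} {a b : ℝ}
    (hXa : X ≤ Lp.const ⊤ μ a) (hab : a ≤ b) :
    ρ (X - Lp.const ⊤ μ b) - b = ρ (X - Lp.const ⊤ μ a) - a := by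
  have hsplit : X - Lp.const ⊤ μ b = X - Lp.const ⊤ μ a - Lp.const ⊤ μ (b - a) := by
    rw [map_sub]
    abel
  rw [hsplit, hρ _ (sub_nonpos.mpr hXa) _ (sub_nonneg.mpr hab)]
  ring

theorem cashAdditiveExtension_eq (hρ : CashLossAdditive ρ) {X : Lp ℝ ⊤ μ} {a : ℝ}
    (hXa : X ≤ Lp.const ⊤ μ a) :
    cashAdditiveExtension ρ X = ρ (X - Lp.const ⊤ μ a) - a := by
  rcases le_total a ‖X‖ with h | h
  · exact hρ.sub_const_sub_eq_of_le hXa h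
  · exact (hρ.sub_const_sub_eq_of_le (Lp.le_const_norm X) h).symm

theorem cashAdditiveExtension_add_const (hρ : CashLossAdditive ρ) (X : Lp ℝ ⊤ μ) (c : ℝ) :
    cashAdditiveExtension ρ (X + Lp.const ⊤ μ c) = cashAdditiveExtension ρ X - c := by
  have hXc : X + Lp.const ⊤ μ c ≤ Lp.const ⊤ μ (‖X‖ + c) := by
    rw [map_add]
    exact add_le_add_left (Lp.le_const_norm X) _
  rw [hρ.cashAdditiveExtension_eq hXc, hρ.cashAdditiveExtension_eq (Lp.le_const_norm X),
    map_add, add_sub_add_right_eq_sub]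
  ring

theorem cashAdditiveExtension_inf_zero (hρ : CashLossAdditive ρ)
    (hloss : ∀ X : Lp ℝ ⊤ μ, ρ X = ρ (X ⊓ 0)) (X : Lp ℝ ⊤ μ) :
    ρ X = cashAdditiveExtension ρ (X ⊓ 0) := by
  have h0 : X ⊓ 0 ≤ Lp.const ⊤ μ 0 := by
    rw [map_zero]
    exact inf_le_right
  rw [hρ.cashAdditiveExtension_eq h0, map_zero, sub_zero, sub_zero, ← hloss]

theorem cashAdditiveExtension_antitone (hρ : CashLossAdditive ρ) (hmono : Antitone ρ) :
    Antitone (cashAdditiveExtension ρ) := by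
  intro X Y hXY
  obtain ⟨a, hXa, hYa⟩ := Lp.exists_le_const_and_le_const X Y
  rw [hρ.cashAdditiveExtension_eq hXa, hρ.cashAdditiveExtension_eq hYa]
  exact sub_le_sub_right (hmono (sub_le_sub_right hXY _)) a

theorem cashAdditiveExtension_convex (hρ : CashLossAdditive ρ)
    (hconv : ∀ X Y : Lp ℝ ⊤ μ, ∀ α : ℝ, 0 < α → α < 1 →
      ρ (α • X + (1 - α) • Y) ≤ α * ρ X + (1 - α) * ρ Y)
    (X Y : Lp ℝ ⊤ μ) {α : ℝ} (hα₀ : 0 < α) (hα₁ : α < 1) :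
    cashAdditiveExtension ρ (α • X + (1 - α) • Y) ≤
      α * cashAdditiveExtension ρ X + (1 - α) * cashAdditiveExtension ρ Y := by
  obtain ⟨a, hXa, hYa⟩ := Lp.exists_le_const_and_le_const X Y
  set C := Lp.const ⊤ μ a
  have hcomb : α • X + (1 - α) • Y ≤ C :=
    calc α • X + (1 - α) • Y ≤ α • C + (1 - α) • C :=
          add_le_add (smul_le_smul_of_nonneg_left hXa hα₀.le)
            (smul_le_smul_of_nonneg_left hYa (sub_nonneg.mpr hα₁.le))
      _ = C := by rw [← add_smul, add_sub_cancel, one_smul]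
  have hshift : α • X + (1 - α) • Y - C = α • (X - C) + (1 - α) • (Y - C) := by
    module
  rw [hρ.cashAdditiveExtension_eq hcomb, hρ.cashAdditiveExtension_eq hXa,
    hρ.cashAdditiveExtension_eq hYa, hshift]
  linarith [hconv (X - C) (Y - C) α hα₀ hα₁]

end CashLossAdditive

end CashAdditiveExtension

theorem stmt_7_general {Ω : Type*} [MeasurableSpace Ω] (μ : Measure Ω) [IsProbabilityMeasure μ]
    (ρ : Lp ℝ ⊤ μ → ℝ)
    (hconv : ∀ X Y : Lp ℝ ⊤ μ, ∀ α : ℝ, 0 < α → α < 1 →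
      ρ (α • X + (1 - α) • Y) ≤ α * ρ X + (1 - α) * ρ Y)
    (hmono : ∀ X Y : Lp ℝ ⊤ μ, X ≤ Y → ρ Y ≤ ρ X)
    (hloss : ∀ X : Lp ℝ ⊤ μ, ρ X = ρ (X ⊓ 0))
    (hcla : ∀ X : Lp ℝ ⊤ μ, X ≤ 0 → ∀ α : ℝ, 0 ≤ α →
      ρ (X - Lp.const ⊤ μ α) = ρ X + α) :
    ∃ ρt : Lp ℝ ⊤ μ → ℝ,
      (∀ (X : Lp ℝ ⊤ μ) (c : ℝ), ρt (X + Lp.const ⊤ μ c) = ρt X - c) ∧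
      (∀ X Y : Lp ℝ ⊤ μ, X ≤ Y → ρt Y ≤ ρt X) ∧
      (∀ X Y : Lp ℝ ⊤ μ, ∀ α : ℝ, 0 < α → α < 1 →
        ρt (α • X + (1 - α) • Y) ≤ α * ρt X + (1 - α) * ρt Y) ∧
      (∀ X : Lp ℝ ⊤ μ, ρ X = ρt (X ⊓ 0)) ∧
      (∀ (X : Lp ℝ ⊤ μ) (a : ℝ), X ≤ Lp.const ⊤ μ a →
        ρt X = ρ (X - Lp.const ⊤ μ a) - a) := by
  have hρ : CashLossAdditive ρ := hcla
  exact ⟨cashAdditiveExtension ρ, hρ.cashAdditiveExtension_add_const,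
    fun _ _ hXY => hρ.cashAdditiveExtension_antitone hmono hXY,
    fun X Y _ => hρ.cashAdditiveExtension_convex hconv X Y,
    hρ.cashAdditiveExtension_inf_zero hloss, fun _ _ => hρ.cashAdditiveExtension_eq⟩

/-- A convex loss-based risk measure satisfying cash-loss additivity is the loss-based
version of a convex risk measure: there is a cash-additive, monotone decreasing, convex
`ρ̃` with `ρ(X) = ρ̃(min(X,0))`, given explicitly by `ρ̃(X) = ρ(X - α_X) - α_X` for any
upper bound `α_X` of `X`. -/
theorem stmt_7 {Ω : Type*} [MeasurableSpace Ω] (μ : Measure Ω) [IsProbabilityMeasure μ]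
    (ρ : Lp ℝ ⊤ μ → ℝ)
    (hconv : ∀ X Y : Lp ℝ ⊤ μ, ∀ α : ℝ, 0 < α → α < 1 →
      ρ (α • X + (1 - α) • Y) ≤ α * ρ X + (1 - α) * ρ Y)
    (hmono : ∀ X Y : Lp ℝ ⊤ μ, X ≤ Y → ρ Y ≤ ρ X)
    (hcash : ∀ α : ℝ, 0 ≤ α → ρ (Lp.const ⊤ μ (-α)) = α)
    (hloss : ∀ X : Lp ℝ ⊤ μ, ρ X = ρ (X ⊓ 0))
    (hcla : ∀ X : Lp ℝ ⊤ μ, X ≤ 0 → ∀ α : ℝ, 0 ≤ α →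
      ρ (X - Lp.const ⊤ μ α) = ρ X + α) :
    ∃ ρt : Lp ℝ ⊤ μ → ℝ,
      (∀ (X : Lp ℝ ⊤ μ) (c : ℝ), ρt (X + Lp.const ⊤ μ c) = ρt X - c) ∧
      (∀ X Y : Lp ℝ ⊤ μ, X ≤ Y → ρt Y ≤ ρt X) ∧
      (∀ X Y : Lp ℝ ⊤ μ, ∀ α : ℝ, 0 < α → α < 1 →
        ρt (α • X + (1 - α) • Y) ≤ α * ρt X + (1 - α) * ρt Y) ∧
      (∀ X : Lp ℝ ⊤ μ, ρ X = ρt (X ⊓ 0)) ∧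
      (∀ (X : Lp ℝ ⊤ μ) (a : ℝ), X ≤ Lp.const ⊤ μ a →
        ρt X = ρ (X - Lp.const ⊤ μ a) - a) :=
  stmt_7_general μ ρ hconv hmono hloss hcla
end

section
/- Let F be a distribution function, z ∈ ℝ, ε ∈ (0,1), and define F_ε := (1-ε)F + ε·1_{[z,∞)} (mixture with a Dirac mass at z). Then the left-continuous inverse G_ε = F_ε⁻¹ satisfies: G_ε(t) = G((t-ε)/(1-ε)) for t > ε + (1-ε)F(z); G_ε(t) = G(t/(1-ε)) for t ≤ (1-ε)F(z-); and G_ε(t) = z for (1-ε)F(z-) < t ≤ ε + (1-ε)F(z), where G = F⁻¹ and F(z-) is the left limit. -/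
/-! Left of `z` the mixture is `(1-ε)F`, bounded by `(1-ε)F(z-)`; from `z` on it is `ε + (1-ε)F`,
bounded below by `ε + (1-ε)F(z)`. So for `t` above or below this jump, `t ≤ F_ε x` is equivalent
to a single inequality `s ≤ F x` with `s = (t-ε)/(1-ε)` resp. `t/(1-ε)`, while for `t` inside the
jump the superlevel set of `F_ε` is exactly `[z, ∞)`. -/

open Filter Topology

noncomputable def quantile (H : ℝ → ℝ) (t : ℝ) : ℝ :=
  sInf {x | t ≤ H x}

noncomputable def diracMixture (F : ℝ → ℝ) (ε z x : ℝ) : ℝ :=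
  (1 - ε) * F x + ε * if z ≤ x then 1 else 0

section DiracMixture

variable {F : ℝ → ℝ} {ε z t : ℝ}

lemma le_diracMixture_iff (hε1 : ε < 1) (x : ℝ) :
    t ≤ diracMixture F ε z x ↔
      (z ≤ x ∧ (t - ε) / (1 - ε) ≤ F x) ∨ (x < z ∧ t / (1 - ε) ≤ F x) := by
  have h1ε : 0 < 1 - ε := by linarith
  rcases le_or_gt z x with hzx | hxz
  · simp only [diracMixture, hzx, not_lt.2 hzx, div_le_iff₀ h1ε, if_true, true_and,
      false_and, or_false]
    constructor <;> intro <;> linarith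
  · simp only [diracMixture, hxz, not_le.2 hxz, div_le_iff₀ h1ε, if_false, true_and,
      false_and, false_or]
    constructor <;> intro <;> linarith

lemma quantile_diracMixture_of_gt (hF : Monotone F) (hε0 : 0 ≤ ε) (hε1 : ε < 1)
    (ht : ε + (1 - ε) * F z < t) :
    quantile (diracMixture F ε z) t = quantile F ((t - ε) / (1 - ε)) := by
  have h1ε : 0 < 1 - ε := by linarith
  have hzs : F z < (t - ε) / (1 - ε) := by rw [lt_div_iff₀ h1ε]; linarith
  have hst : (t - ε) / (1 - ε) ≤ t / (1 - ε) := by gcongr; linarith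
  refine congrArg sInf (Set.ext fun x => (le_diracMixture_iff hε1 x).trans ⟨?_, ?_⟩)
  · rintro (⟨-, h⟩ | ⟨hxz, h⟩)
    · exact h
    · exact absurd (hF hxz.le) (not_le.2 (hzs.trans_le (hst.trans h)))
  · exact fun h => Or.inl ⟨(hF.reflect_lt (hzs.trans_le h)).le, h⟩

lemma quantile_diracMixture_of_le_leftLim (hF : Monotone F) (hε0 : 0 ≤ ε) (hε1 : ε < 1)
    (ht : t ≤ (1 - ε) * Function.leftLim F z) :
    quantile (diracMixture F ε z) t = quantile F (t / (1 - ε)) := by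
  have h1ε : 0 < 1 - ε := by linarith
  have hsz : t / (1 - ε) ≤ Function.leftLim F z := by rwa [div_le_iff₀' h1ε]
  have hst : (t - ε) / (1 - ε) ≤ t / (1 - ε) := by gcongr; linarith
  refine congrArg sInf (Set.ext fun x => (le_diracMixture_iff hε1 x).trans ⟨?_, ?_⟩)
  · rintro (⟨hzx, -⟩ | ⟨-, h⟩)
    · exact hsz.trans (hF.leftLim_le hzx)
    · exact h
  · intro h
    rcases le_or_gt z x with hzx | hxz
    · exact Or.inl ⟨hzx, hst.trans h⟩
    · exact Or.inr ⟨hxz, h⟩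

lemma quantile_diracMixture_of_mem_jump (hF : Monotone F) (hε1 : ε < 1)
    (ht₁ : (1 - ε) * Function.leftLim F z < t) (ht₂ : t ≤ ε + (1 - ε) * F z) :
    quantile (diracMixture F ε z) t = z := by
  have h1ε : 0 < 1 - ε := by linarith
  have hzs : Function.leftLim F z < t / (1 - ε) := by rwa [lt_div_iff₀' h1ε]
  have hsz : (t - ε) / (1 - ε) ≤ F z := by rw [div_le_iff₀' h1ε]; linarith
  have hset : {x | t ≤ diracMixture F ε z x} = Set.Ici z := by
    refine Set.ext fun x => (le_diracMixture_iff hε1 x).trans ⟨?_, ?_⟩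
    · rintro (⟨hzx, -⟩ | ⟨hxz, h⟩)
      · exact hzx
      · exact absurd ((hF.le_leftLim hxz).trans_lt hzs) (not_lt.2 h)
    · exact fun hzx => Or.inl ⟨hzx, hsz.trans (hF hzx)⟩
  rw [quantile, hset, csInf_Ici]

end DiracMixture

theorem stmt_15_general (F : ℝ → ℝ)
    (hmono : Monotone F)
    (z : ℝ) (ε : ℝ) (hε0 : 0 < ε) (hε1 : ε < 1)
    (Fε : ℝ → ℝ)
    (hFε : ∀ x, Fε x = (1 - ε) * F x + ε * (if z ≤ x then 1 else 0))
    (G Gε : ℝ → ℝ)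
    (hG : ∀ t, G t = sInf {x : ℝ | t ≤ F x})
    (hGε : ∀ t, Gε t = sInf {x : ℝ | t ≤ Fε x}) :
    ∀ t : ℝ, 0 < t → t < 1 →
      (ε + (1 - ε) * F z < t → Gε t = G ((t - ε) / (1 - ε))) ∧
      (t ≤ (1 - ε) * Function.leftLim F z → Gε t = G (t / (1 - ε))) ∧
      ((1 - ε) * Function.leftLim F z < t → t ≤ ε + (1 - ε) * F z → Gε t = z) := by
  obtain rfl : Fε = diracMixture F ε z := funext hFε
  obtain rfl : G = quantile F := funext hG
  obtain rfl : Gε = quantile (diracMixture F ε z) := funext hGε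
  intro t _ _
  exact ⟨quantile_diracMixture_of_gt hmono hε0.le hε1,
    quantile_diracMixture_of_le_leftLim hmono hε0.le hε1,
    quantile_diracMixture_of_mem_jump hmono hε1⟩

/-- Quantile function of the mixture `F_ε = (1-ε)F + ε·1_{[z,∞)}` of a distribution `F`
with a Dirac mass at `z`: with `G = F⁻¹` and `G_ε = F_ε⁻¹`,
`G_ε(t) = G((t-ε)/(1-ε))` for `t > ε + (1-ε)F(z)`, `G_ε(t) = G(t/(1-ε))` for
`t ≤ (1-ε)F(z-)`, and `G_ε(t) = z` for `(1-ε)F(z-) < t ≤ ε + (1-ε)F(z)`. -/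
theorem stmt_15 (F : ℝ → ℝ)
    (hmono : Monotone F)
    (hrc : ∀ x, ContinuousWithinAt F (Set.Ici x) x)
    (h01 : ∀ x, 0 ≤ F x ∧ F x ≤ 1)
    (htop : Tendsto F atTop (𝓝 1))
    (hbot : Tendsto F atBot (𝓝 0))
    (z : ℝ) (ε : ℝ) (hε0 : 0 < ε) (hε1 : ε < 1)
    (Fε : ℝ → ℝ)
    (hFε : ∀ x, Fε x = (1 - ε) * F x + ε * (if z ≤ x then 1 else 0))
    (G Gε : ℝ → ℝ)
    (hG : ∀ t, G t = sInf {x : ℝ | t ≤ F x})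
    (hGε : ∀ t, Gε t = sInf {x : ℝ | t ≤ Fε x}) :
    ∀ t : ℝ, 0 < t → t < 1 →
      (ε + (1 - ε) * F z < t → Gε t = G ((t - ε) / (1 - ε))) ∧
      (t ≤ (1 - ε) * Function.leftLim F z → Gε t = G (t / (1 - ε))) ∧
      ((1 - ε) * Function.leftLim F z < t → t ≤ ε + (1 - ε) * F z → Gε t = z) :=
  stmt_15_general F hmono z ε hε0 hε1 Fε hFε G Gε hG hGε
end

section
/- The sensitivity function of the loss certainty equivalent ρ(F) := u⁻¹(∫ u(|min(x,0)|) dF(x)) at a distribution F in the direction of the Dirac mass at z ∈ ℝ equals S(z;F) = (u(|min(z,0)|) - u(ρ(F))) / u'(ρ(F)); that is, the limit as ε → 0+ of (ρ(εδ_z + (1-ε)F) - ρ(F))/ε equals this expression. -/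
/-!
For the mixture `F_ε = ε δ_z + (1 - ε) F`, linearity of the integral in the measure gives
`u (ρ F_ε) - u (ρ F) = ε (u |min z 0| - u (ρ F))`. Hence `u (ρ F_ε) → u (ρ F)`, and strict
monotonicity of `u` forces `ρ F_ε → ρ F`. Writing the same difference as
`(ρ F_ε - ρ F) · dslope u (ρ F) (ρ F_ε)`, where the `dslope` factor tends to `u' (ρ F) ≠ 0`,
and dividing by `ε` gives the limit.
-/

open MeasureTheory Filter Topology

theorem StrictMonoOn.tendsto_of_tendsto_comp {α β ι : Type*} [LinearOrder α] [TopologicalSpace α]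
    [OrderTopology α] [LinearOrder β] [TopologicalSpace β] [OrderTopology β]
    {u : α → β} {s : Set α} (hu : StrictMonoOn u s) (hs : s.OrdConnected)
    {f : ι → α} {l : Filter ι} {c : α} (hc : c ∈ s) (hfs : ∀ᶠ i in l, f i ∈ s)
    (hf : Tendsto (fun i => u (f i)) l (𝓝 (u c))) : Tendsto f l (𝓝 c) := by
  rw [tendsto_order]
  constructor
  · intro a hac
    by_cases hbelow : ∃ b ∈ s, b ≤ a
    · obtain ⟨b, hb, hba⟩ := hbelow
      have has : a ∈ s := hs.out hb hc ⟨hba, hac.le⟩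
      filter_upwards [hfs, hf.eventually (lt_mem_nhds (hu has hc hac))] with i hfi hlt
      by_contra! hle
      exact (hu.monotoneOn hfi has hle).not_gt hlt
    · push Not at hbelow
      filter_upwards [hfs] with i hfi using hbelow _ hfi
  · intro a hca
    by_cases habove : ∃ b ∈ s, a ≤ b
    · obtain ⟨b, hb, hab⟩ := habove
      have has : a ∈ s := hs.out hc hb ⟨hca.le, hab⟩
      filter_upwards [hfs, hf.eventually (gt_mem_nhds (hu hc has hca))] with i hfi hlt
      by_contra! hle
      exact (hu.monotoneOn has hfi hle).not_gt hlt
    · push Not at habove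
      filter_upwards [hfs] with i hfi using habove _ hfi

theorem HasDerivAt.tendsto_sub_div_of_comp_sub_eq_mul {u : ℝ → ℝ} {u' c k : ℝ}
    (hu : HasDerivAt u u' c) (hu' : u' ≠ 0) {ι : Type*} {l : Filter ι} {f t : ι → ℝ}
    (hf : Tendsto f l (𝓝 c)) (ht : ∀ᶠ i in l, t i ≠ 0)
    (hft : ∀ᶠ i in l, u (f i) - u c = t i * k) :
    Tendsto (fun i => (f i - c) / t i) l (𝓝 (k / u')) := by
  have hslope : Tendsto (fun i => dslope u c (f i)) l (𝓝 u') := by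
    have := (continuousAt_dslope_same.2 hu.differentiableAt).tendsto.comp hf
    rwa [dslope_same, hu.deriv] at this
  refine (tendsto_const_nhds.div hslope hu').congr' ?_
  filter_upwards [ht, hft, hslope.eventually_ne hu'] with i hti hfti hslopei
  have hprod : (f i - c) * dslope u c (f i) = t i * k := by
    rw [← smul_eq_mul, sub_smul_dslope, hfti]
  change k / dslope u c (f i) = (f i - c) / t i
  rw [div_eq_div_iff hslopei hti]
  linarith

theorem isProbabilityMeasure_ofReal_smul_add_ofReal_smul {α : Type*} [MeasurableSpace α]
    (μ ν : Measure α) [IsProbabilityMeasure μ] [IsProbabilityMeasure ν] {ε : ℝ}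
    (hε₀ : 0 ≤ ε) (hε₁ : ε ≤ 1) :
    IsProbabilityMeasure (ENNReal.ofReal ε • μ + ENNReal.ofReal (1 - ε) • ν) := by
  constructor
  simp only [Measure.add_apply, Measure.smul_apply, smul_eq_mul, measure_univ, mul_one]
  rw [← ENNReal.ofReal_add hε₀ (sub_nonneg.2 hε₁)]
  norm_num

theorem integral_ofReal_smul_dirac_add_ofReal_smul {α : Type*} [MeasurableSpace α]
    [MeasurableSingletonClass α] {ν : Measure α} {g : α → ℝ} (hg : Integrable g ν)
    (z : α) {a b : ℝ} (ha : 0 ≤ a) (hb : 0 ≤ b) :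
    ∫ x, g x ∂(ENNReal.ofReal a • Measure.dirac z + ENNReal.ofReal b • ν) =
      a * g z + b * ∫ x, g x ∂ν := by
  have hdirac : Integrable g (Measure.dirac z) := integrable_dirac enorm_lt_top
  rw [integral_add_measure (hdirac.smul_measure ENNReal.ofReal_ne_top)
    (hg.smul_measure ENNReal.ofReal_ne_top), integral_smul_measure, integral_smul_measure,
    integral_dirac, ENNReal.toReal_ofReal ha, ENNReal.toReal_ofReal hb, smul_eq_mul, smul_eq_mul]

theorem Continuous.integrable_of_measure_lt_abs_eq_zero {ν : Measure ℝ} [IsFiniteMeasure ν]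
    {g : ℝ → ℝ} (hg : Continuous g) {R : ℝ} (hR : ν {x | R < |x|} = 0) : Integrable g ν := by
  have hae : ∀ᵐ x ∂ν, x ∈ Set.Icc (-R) R := by
    rw [ae_iff]
    simpa only [Set.mem_Icc, ← abs_le, not_le] using hR
  rw [← Measure.restrict_eq_self_of_ae_mem hae]
  exact hg.continuousOn.integrableOn_compact isCompact_Icc

theorem stmt_16_general (u u' : ℝ → ℝ)
    (hu_mono : StrictMonoOn u (Set.Ici 0))
    (hu_deriv : ∀ x, HasDerivAt u (u' x) x)
    (ν : Measure ℝ) [IsProbabilityMeasure ν]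
    (hsupp : ∃ R : ℝ, ν {x : ℝ | R < |x|} = 0)
    (ρ : Measure ℝ → ℝ)
    (hρ : ∀ m : Measure ℝ, IsProbabilityMeasure m →
      0 ≤ ρ m ∧ u (ρ m) = ∫ x, u |min x 0| ∂m)
    (hpos : 0 < u' (ρ ν)) (z : ℝ) :
    Tendsto
      (fun ε : ℝ =>
        (ρ (ENNReal.ofReal ε • Measure.dirac z + ENNReal.ofReal (1 - ε) • ν) - ρ ν) / ε)
      (𝓝[>] 0)
      (𝓝 ((u |min z 0| - u (ρ ν)) / u' (ρ ν))) := by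
  obtain ⟨hρν₀, hρν⟩ := hρ ν inferInstance
  obtain ⟨R, hR⟩ := hsupp
  have hu_cont : Continuous u :=
    continuous_iff_continuousAt.2 fun x => (hu_deriv x).continuousAt
  have hg : Integrable (fun x => u |min x 0|) ν :=
    (hu_cont.comp (continuous_id.min continuous_const).abs).integrable_of_measure_lt_abs_eq_zero hR
  set k := u |min z 0| - u (ρ ν)
  have hmix : ∀ᶠ ε in 𝓝[>] (0 : ℝ), ε ≠ 0 ∧
      0 ≤ ρ (ENNReal.ofReal ε • Measure.dirac z + ENNReal.ofReal (1 - ε) • ν) ∧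
      u (ρ (ENNReal.ofReal ε • Measure.dirac z + ENNReal.ofReal (1 - ε) • ν)) - u (ρ ν) =
        ε * k := by
    filter_upwards [Ioo_mem_nhdsGT one_pos] with ε ⟨hε₀, hε₁⟩
    obtain ⟨hnonneg, hint⟩ :=
      hρ _ (isProbabilityMeasure_ofReal_smul_add_ofReal_smul (Measure.dirac z) ν hε₀.le hε₁.le)
    refine ⟨hε₀.ne', hnonneg, ?_⟩
    rw [hint, integral_ofReal_smul_dirac_add_ofReal_smul hg z hε₀.le (sub_nonneg.2 hε₁.le), ← hρν]
    ring
  have hlin : Tendsto (fun ε : ℝ => u (ρ ν) + ε * k) (𝓝[>] 0) (𝓝 (u (ρ ν))) :=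
    ((continuous_const.add (continuous_id.mul continuous_const)).tendsto' 0 _
      (by simp)).mono_left nhdsWithin_le_nhds
  have hcont := hu_mono.tendsto_of_tendsto_comp Set.ordConnected_Ici hρν₀
    (hmix.mono fun _ h => h.2.1) (hlin.congr' (hmix.mono fun _ h => by linarith [h.2.2]))
  exact (hu_deriv _).tendsto_sub_div_of_comp_sub_eq_mul hpos.ne' hcont
    (hmix.mono fun _ h => h.1) (hmix.mono fun _ h => h.2.2)

/-- Sensitivity function of the loss certainty equivalent
`ρ(F) = u⁻¹(∫ u(|min(x,0)|) dF)` at a compactly supported distribution `F` in the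
direction of the Dirac mass at `z`:
`lim_{ε→0+} (ρ(εδ_z + (1-ε)F) - ρ(F))/ε = (u(|min(z,0)|) - u(ρ(F))) / u'(ρ(F))`. -/
theorem stmt_16 (u u' : ℝ → ℝ)
    (hu_mono : StrictMonoOn u (Set.Ici 0))
    (hu_deriv : ∀ x, HasDerivAt u (u' x) x)
    (hu'_cont : Continuous u')
    (hu0 : u 0 = 0)
    (ν : Measure ℝ) [IsProbabilityMeasure ν]
    (hsupp : ∃ R : ℝ, ν {x : ℝ | R < |x|} = 0)
    (ρ : Measure ℝ → ℝ)
    (hρ : ∀ m : Measure ℝ, IsProbabilityMeasure m →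
      0 ≤ ρ m ∧ u (ρ m) = ∫ x, u |min x 0| ∂m)
    (hpos : 0 < u' (ρ ν)) (z : ℝ) :
    Tendsto
      (fun ε : ℝ =>
        (ρ (ENNReal.ofReal ε • Measure.dirac z + ENNReal.ofReal (1 - ε) • ν) - ρ ν) / ε)
      (𝓝[>] 0)
      (𝓝 ((u |min z 0| - u (ρ ν)) / u' (ρ ν))) :=
  stmt_16_general u u' hu_mono hu_deriv ν hsupp ρ hρ hpos z
end

section
/- Let dom(v) ⊆ M((0,1)) be a set of finite positive measures on (0,1) and v : dom(v) → [0,∞). Define ρ(G) := -inf over m ∈ dom(v) of {∫_{(0,1)} min(G(z),0) m(dz) + v(m)} for bounded nondecreasing G : (0,1) → ℝ. If there exist δ_n ↓ 0 and m_n ∈ dom(v) with m_n((0,δ_n)) > 0 for every n, then ρ is not sequentially continuous at G ≡ 0 with respect to pointwise convergence at continuity points: there exist bounded continuous quantile functions G_n converging to 0 pointwise on (0,1) with ρ(G_n) ≥ 1 for all n while ρ(0) = 0. -/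
/-!
Take `G_n = negRamp β_n δ_n`, equal to `-β_n` on `(0, δ_n]`, linear on `[δ_n, 2δ_n]` and `0`
afterwards. Since `δ_n → 0`, `G_n(z) = 0` eventually for each fixed `z > 0`. Testing the
infimum defining `ρ(G_n)` against `m_n`, which gives mass `m_n((0,δ_n)) > 0` to the region
where `G_n = -β_n`, yields `ρ(G_n) ≥ β_n m_n((0,δ_n)) - v(m_n) = 1` by the choice of `β_n`;
the infimum is finite because all measures in `dom v` have mass at most `1`.
-/

open MeasureTheory Filter Topology

noncomputable def negRamp (β δ z : ℝ) : ℝ := min 0 (max (-β) (β * (z / δ - 2)))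

section negRamp

variable {β δ : ℝ}

theorem negRamp_nonpos (β δ z : ℝ) : negRamp β δ z ≤ 0 := min_le_left _ _

theorem min_negRamp_zero (β δ z : ℝ) : min (negRamp β δ z) 0 = negRamp β δ z :=
  min_eq_left (negRamp_nonpos β δ z)

theorem neg_le_negRamp (hβ : 0 ≤ β) (z : ℝ) : -β ≤ negRamp β δ z :=
  le_min (by linarith) (le_max_left _ _)

theorem abs_negRamp_le (hβ : 0 ≤ β) (z : ℝ) : |negRamp β δ z| ≤ β :=
  abs_le.2 ⟨neg_le_negRamp hβ z, (negRamp_nonpos β δ z).trans hβ⟩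

theorem continuous_negRamp (β δ : ℝ) : Continuous (negRamp β δ) := by
  unfold negRamp
  fun_prop

theorem monotone_negRamp (hβ : 0 ≤ β) (hδ : 0 ≤ δ) : Monotone (negRamp β δ) := by
  intro a b hab
  unfold negRamp
  gcongr

theorem negRamp_of_le (hβ : 0 ≤ β) (hδ : 0 < δ) {z : ℝ} (hz : z ≤ δ) :
    negRamp β δ z = -β := by
  have : z / δ ≤ 1 := (div_le_one hδ).2 hz
  have : β * (z / δ - 2) ≤ -β := by nlinarith
  rw [negRamp, max_eq_left this, min_eq_right (by linarith)]

theorem negRamp_of_two_mul_le (hβ : 0 ≤ β) (hδ : 0 < δ) {z : ℝ} (hz : 2 * δ ≤ z) :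
    negRamp β δ z = 0 := by
  have : 2 ≤ z / δ := (le_div_iff₀ hδ).2 (by linarith)
  have : 0 ≤ β * (z / δ - 2) := mul_nonneg hβ (by linarith)
  exact min_eq_left (le_max_of_le_right this)

theorem tendsto_negRamp {β δ : ℕ → ℝ} (hβ : ∀ n, 0 ≤ β n) (hδpos : ∀ n, 0 < δ n)
    (hδ : Tendsto δ atTop (𝓝 0)) {z : ℝ} (hz : 0 < z) :
    Tendsto (fun n => negRamp (β n) (δ n) z) atTop (𝓝 0) := by
  refine tendsto_const_nhds.congr' ?_
  filter_upwards [hδ.eventually_lt_const (half_pos hz)] with n hn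
  exact (negRamp_of_two_mul_le (hβ n) (hδpos n) (by linarith)).symm

end negRamp

theorem integral_le_mul_measureReal {α : Type*} [MeasurableSpace α] {μ : Measure α}
    [IsFiniteMeasure μ] {f : α → ℝ} {t : Set α} {c : ℝ} (hf : Integrable f μ)
    (hf0 : ∀ z, f z ≤ 0) (ht : MeasurableSet t) (hft : ∀ z ∈ t, f z ≤ c) :
    ∫ z, f z ∂μ ≤ c * μ.real t := by
  calc ∫ z, f z ∂μ ≤ ∫ z, t.indicator (fun _ => c) z ∂μ := by
        refine integral_mono hf ((integrable_const c).indicator ht) fun z => ?_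
        by_cases hz : z ∈ t
        · simpa [hz] using hft z hz
        · simpa [hz] using hf0 z
    _ = c * μ.real t := by rw [integral_indicator_const c ht, smul_eq_mul, mul_comm]

theorem le_neg_sInf_image {α : Type*} {s : Set α} {F : α → ℝ} {b c : ℝ}
    (hb : ∀ a ∈ s, b ≤ F a) {a : α} (ha : a ∈ s) (hFa : F a ≤ -c) :
    c ≤ -sInf (F '' s) := by
  have : sInf (F '' s) ≤ F a := csInf_le ⟨b, Set.forall_mem_image.2 hb⟩ ⟨a, ha, rfl⟩
  linarith

theorem sInf_image_eq_zero {α : Type*} {s : Set α} {f : α → ℝ} (hf : ∀ a ∈ s, 0 ≤ f a)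
    (hsmall : ∀ ε > 0, ∃ a ∈ s, f a < ε) : sInf (f '' s) = 0 := by
  refine le_antisymm (le_of_forall_pos_le_add fun ε hε => ?_)
    (Real.sInf_nonneg (Set.forall_mem_image.2 hf))
  obtain ⟨a, ha, hfa⟩ := hsmall ε hε
  have := csInf_le ⟨0, Set.forall_mem_image.2 hf⟩ ⟨a, ha, rfl⟩
  linarith

section negRampIntegral

variable {μ : Measure ℝ} {β δ : ℝ}

theorem integrable_negRamp [IsFiniteMeasure μ] (hβ : 0 ≤ β) : Integrable (negRamp β δ) μ :=
  Integrable.of_bound (continuous_negRamp β δ).aestronglyMeasurable β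
    (ae_of_all _ fun z => by simpa using abs_negRamp_le hβ z)

theorem neg_le_setIntegral_negRamp (hμ : μ Set.univ ≤ 1) (hβ : 0 ≤ β) {s : Set ℝ}
    (hs : MeasurableSet s) : -β ≤ ∫ z in s, negRamp β δ z ∂μ := by
  have : IsFiniteMeasure μ := ⟨hμ.trans_lt ENNReal.one_lt_top⟩
  have hμs : μ.real s ≤ 1 :=
    ENNReal.toReal_le_of_le_ofReal zero_le_one
      (by simpa using (measure_mono (Set.subset_univ s)).trans hμ)
  calc -β ≤ -β * μ.real s := by nlinarith [measureReal_nonneg (μ := μ) (s := s)]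
    _ ≤ ∫ z in s, negRamp β δ z ∂μ :=
      setIntegral_ge_of_const_le_real hs (measure_ne_top μ s) (fun z _ => neg_le_negRamp hβ z)
        (integrable_negRamp hβ).integrableOn

theorem setIntegral_negRamp_le [IsFiniteMeasure μ] (hμ : μ (Set.Ioo 0 1)ᶜ = 0) (hβ : 0 ≤ β)
    (hδ : 0 < δ) :
    ∫ z in Set.Ioo 0 1, negRamp β δ z ∂μ ≤ -β * μ.real (Set.Ioo 0 δ) := by
  calc ∫ z in Set.Ioo 0 1, negRamp β δ z ∂μ
      ≤ -β * (μ.restrict (Set.Ioo 0 1)).real (Set.Ioo 0 δ) :=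
        integral_le_mul_measureReal (integrable_negRamp hβ) (negRamp_nonpos β δ)
          measurableSet_Ioo fun z hz => (negRamp_of_le hβ hδ hz.2.le).le
    _ = -β * μ.real (Set.Ioo 0 δ) := by
      rw [measureReal_restrict_apply measurableSet_Ioo, measureReal_def, measureReal_def,
        measure_inter_conull hμ]

end negRampIntegral

/-- If the domain of the penalty `v` contains measures `m_n` putting positive mass on
`(0,δ_n)` with `δ_n ↓ 0`, then the loss-based risk measure
`ρ(G) = -inf_{m ∈ dom v} {∫ min(G,0) dm + v(m)}` is not sequentially continuous at
`G ≡ 0`: there are bounded continuous monotone `G_n → 0` pointwise on `(0,1)` with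
`ρ(G_n) ≥ 1` for all `n`, while `ρ(0) = 0`. -/
theorem stmt_18 (vDom : Set (Measure ℝ))
    (hdom : ∀ m ∈ vDom, m (Set.Ioo (0:ℝ) 1)ᶜ = 0 ∧ m Set.univ ≤ 1)
    (v : Measure ℝ → ℝ)
    (hv : ∀ m ∈ vDom, 0 ≤ v m)
    (hnorm : ∀ ε : ℝ, 0 < ε → ε < 1 → ∀ c : ℝ, 0 < c →
      ∃ m ∈ vDom, 1 - ε ≤ (m Set.univ).toReal ∧ v m < c)
    (ρ : (ℝ → ℝ) → ℝ)
    (hρ : ∀ G : ℝ → ℝ,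
      ρ G = -sInf ((fun m => (∫ z in Set.Ioo (0:ℝ) 1, min (G z) 0 ∂m) + v m) '' vDom))
    (δ : ℕ → ℝ) (hδpos : ∀ n, 0 < δ n) (hδ : Tendsto δ atTop (𝓝 0))
    (m : ℕ → Measure ℝ) (hm : ∀ n, m n ∈ vDom)
    (hmpos : ∀ n, 0 < m n (Set.Ioo (0:ℝ) (δ n))) :
    ∃ G : ℕ → ℝ → ℝ,
      (∀ n, ContinuousOn (G n) (Set.Ioo (0:ℝ) 1) ∧ MonotoneOn (G n) (Set.Ioo (0:ℝ) 1) ∧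
        ∃ M : ℝ, ∀ z ∈ Set.Ioo (0:ℝ) 1, |G n z| ≤ M) ∧
      (∀ z ∈ Set.Ioo (0:ℝ) 1, Tendsto (fun n => G n z) atTop (𝓝 0)) ∧
      (∀ n, 1 ≤ ρ (G n)) ∧
      ρ (fun _ => 0) = 0 := by
  have hfin (n : ℕ) : IsFiniteMeasure (m n) := ⟨(hdom _ (hm n)).2.trans_lt ENNReal.one_lt_top⟩
  have hmass (n : ℕ) : 0 < (m n).real (Set.Ioo 0 (δ n)) :=
    ENNReal.toReal_pos (hmpos n).ne' (measure_ne_top _ _)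
  set β : ℕ → ℝ := fun n => (v (m n) + 1) / (m n).real (Set.Ioo 0 (δ n))
  have hβ (n : ℕ) : 0 ≤ β n := div_nonneg (by linarith [hv _ (hm n)]) (hmass n).le
  refine ⟨fun n => negRamp (β n) (δ n),
    fun n => ⟨(continuous_negRamp _ _).continuousOn,
      (monotone_negRamp (hβ n) (hδpos n).le).monotoneOn _,
      β n, fun z _ => abs_negRamp_le (hβ n) z⟩,
    fun z hz => tendsto_negRamp hβ hδpos hδ hz.1, fun n => ?_, ?_⟩
  · rw [hρ]
    simp only [min_negRamp_zero]
    refine le_neg_sInf_image (b := -β n) (fun μ hμ => ?_) (hm n) ?_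
    · have := neg_le_setIntegral_negRamp (δ := δ n) (hdom μ hμ).2 (hβ n)
        (measurableSet_Ioo (a := (0:ℝ)) (b := 1))
      linarith [hv μ hμ]
    · have hβmul : β n * (m n).real (Set.Ioo 0 (δ n)) = v (m n) + 1 :=
        div_mul_cancel₀ _ (hmass n).ne'
      linarith [setIntegral_negRamp_le (hdom _ (hm n)).1 (hβ n) (hδpos n)]
  · rw [hρ]
    simp only [min_self, integral_zero, zero_add]
    refine neg_eq_zero.2 (sInf_image_eq_zero hv fun ε hε => ?_)
    obtain ⟨μ, hμ, -, hvμ⟩ := hnorm (1 / 2) (by norm_num) (by norm_num) ε hε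
    exact ⟨μ, hμ, hvμ⟩
end
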